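/- Let W_n = #A_n(p). Then Var(W_n) = O(n); i.e., there exists a constant C (depending on p) with Var(W_n) ≤ Cn for all n. -/

import Mathlib

/-!
Write `X_k` for the indicator of `F_{k+1} ∈ A(p)`, so that `W_n = ∑_{k<n} X_k` and
`Var W_n = ∑_{i,j<n} Cov(X_i, X_j)`. The inclusion probabilities satisfy `a_{k+1} = p (1 - a_k)`,
hence `a_k = p/(1+p) · (1 - (-p)^k)`. If `F_{i+1}` is included then `F_{i+2}` is not, and the
process restarts on fresh coins at `F_{i+3}`; so `E[X_i X_{i+2+m}] = a_{i+1} a_{m+1}`, and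
`Cov(X_i, X_j) ≤ 2 p^|i-j|` (the cases `j = i` and `j = i + 1` being direct). Summing the
geometric rows gives `Var W_n ≤ 4n / (1 - p)`.
-/

open Finset

noncomputable section

def Fib (n : ℕ) : ℕ := Nat.fib (n + 1)

/-- `included c k` : whether `F_{k+1}` is included in the random Zeckendorf process,
given coins `c` (`c k` is the coin for step `k+1`): a Fibonacci number is included
with probability `p` when the previous one was not included, and is excluded otherwise. -/
def included (c : ℕ → Bool) : ℕ → Bool
  | 0 => c 0
  | k + 1 => !included c k && c (k + 1)

/-- Extend a finite coin sequence by `false`. -/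
def ext (n : ℕ) (c : Fin n → Bool) : ℕ → Bool :=
  fun j => if h : j < n then c ⟨j, h⟩ else false

/-- Probability weight of a finite coin sequence, each coin heads with probability `p`. -/
def wt (p : ℝ) {n : ℕ} (c : Fin n → Bool) : ℝ :=
  ∏ i, if c i then p else 1 - p

open Classical in
/-- Probability of an event depending on the first `n` coins. -/
def finProb (p : ℝ) (n : ℕ) (E : (ℕ → Bool) → Prop) : ℝ :=
  ∑ c : Fin n → Bool, if E (ext n c) then wt p c else 0

/-- `Prob (F_k ∈ A(p))` for `k ≥ 1`. -/
def probIncl (p : ℝ) (k : ℕ) : ℝ :=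
  finProb p k (fun c => included c (k - 1) = true)

/-- Expected value of a function of the first `n` coins. -/
def expVal (p : ℝ) (n : ℕ) (f : (ℕ → Bool) → ℝ) : ℝ :=
  ∑ c : Fin n → Bool, wt p c * f (ext n c)

/-- `W_n` : the number of selected indices among `1,...,n`. -/
def countIn (n : ℕ) (c : ℕ → Bool) : ℕ :=
  ((Icc 1 n).filter (fun j => included c (j - 1) = true)).card


theorem sum_wt (p : ℝ) (n : ℕ) : ∑ c : Fin n → Bool, wt p c = 1 := by
  simp only [wt]
  rw [← Fintype.prod_sum (fun (_ : Fin n) (b : Bool) => if b then p else 1 - p)]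
  simp

theorem wt_nonneg {p : ℝ} (h0 : 0 ≤ p) (h1 : p ≤ 1) {n : ℕ} (c : Fin n → Bool) :
    0 ≤ wt p c :=
  prod_nonneg fun i _ => by cases c i <;> simp [h0, h1]

theorem wt_append (p : ℝ) {m k : ℕ} (a : Fin m → Bool) (b : Fin k → Bool) :
    wt p (Fin.append a b) = wt p a * wt p b := by
  simp [wt, Fin.prod_univ_add]

theorem ext_append_of_lt {m k t : ℕ} (a : Fin m → Bool) (b : Fin k → Bool) (h : t < m) :
    ext (m + k) (Fin.append a b) t = ext m a t := by
  simp only [_root_.ext, h, dif_pos, show t < m + k by omega]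
  exact Fin.append_left a b ⟨t, h⟩

theorem ext_append_add {m k : ℕ} (a : Fin m → Bool) (b : Fin k → Bool) (t : ℕ) :
    ext (m + k) (Fin.append a b) (m + t) = ext k b t := by
  by_cases h : t < k
  · simp only [_root_.ext, h, dif_pos, show m + t < m + k by omega]
    exact Fin.append_right a b ⟨t, h⟩
  · simp only [_root_.ext, h, dif_neg, show ¬ m + t < m + k by omega, not_false_eq_true]

section Expectation

variable (p : ℝ) (n : ℕ)

open Classical in
theorem finProb_eq_expVal (E : (ℕ → Bool) → Prop) :
    finProb p n E = expVal p n (fun c => if E c then 1 else 0) := by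
  unfold finProb expVal
  refine sum_congr rfl fun c _ => ?_
  by_cases h : E (ext n c) <;> simp [h]

theorem expVal_const (r : ℝ) : expVal p n (fun _ => r) = r := by
  simp [expVal, ← sum_mul, sum_wt]

theorem expVal_sub (f g : (ℕ → Bool) → ℝ) :
    expVal p n (fun c => f c - g c) = expVal p n f - expVal p n g := by
  simp [expVal, mul_sub, sum_sub_distrib]

theorem expVal_const_mul (r : ℝ) (f : (ℕ → Bool) → ℝ) :
    expVal p n (fun c => r * f c) = r * expVal p n f := by
  simp [expVal, mul_sum, mul_left_comm]

theorem expVal_sum {ι : Type*} (s : Finset ι) (f : ι → (ℕ → Bool) → ℝ) :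
    expVal p n (fun c => ∑ i ∈ s, f i c) = ∑ i ∈ s, expVal p n (f i) := by
  simp [expVal, mul_sum, sum_comm (s := univ)]

variable {p} in
theorem expVal_mono (h0 : 0 ≤ p) (h1 : p ≤ 1) {f g : (ℕ → Bool) → ℝ} (h : ∀ c, f c ≤ g c) :
    expVal p n f ≤ expVal p n g :=
  sum_le_sum fun c _ => mul_le_mul_of_nonneg_left (h _) (wt_nonneg h0 h1 c)

def cov (f g : (ℕ → Bool) → ℝ) : ℝ :=
  expVal p n (fun c => f c * g c) - expVal p n f * expVal p n g

theorem cov_comm (f g : (ℕ → Bool) → ℝ) : cov p n f g = cov p n g f := by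
  simp only [cov, mul_comm]

theorem expVal_centered_mul (f g : (ℕ → Bool) → ℝ) :
    expVal p n (fun c => (f c - expVal p n f) * (g c - expVal p n g)) = cov p n f g := by
  have expand : ∀ a b : ℝ, (fun c => (f c - a) * (g c - b))
      = fun c => (f c * g c - a * g c) - (b * f c - a * b) :=
    fun a b => funext fun c => by ring
  rw [expand, expVal_sub, expVal_sub, expVal_sub, expVal_const_mul, expVal_const_mul,
    expVal_const, cov]
  ring

theorem expVal_sum_sub_sq {ι : Type*} (s : Finset ι) (f : ι → (ℕ → Bool) → ℝ) :
    expVal p n (fun c => (∑ i ∈ s, f i c - expVal p n (fun c' => ∑ i ∈ s, f i c')) ^ 2)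
      = ∑ i ∈ s, ∑ j ∈ s, cov p n (f i) (f j) := by
  have expand : ∀ c, (∑ i ∈ s, f i c - ∑ i ∈ s, expVal p n (f i)) ^ 2
      = ∑ i ∈ s, ∑ j ∈ s, (f i c - expVal p n (f i)) * (f j c - expVal p n (f j)) := by
    intro c
    rw [sq, ← sum_sub_distrib, sum_mul_sum]
  simp only [expVal_sum, expand, expVal_centered_mul]

end Expectation

def DependsOnFirst (m : ℕ) (f : (ℕ → Bool) → ℝ) : Prop :=
  ∀ c c' : ℕ → Bool, (∀ t < m, c t = c' t) → f c = f c'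

theorem DependsOnFirst.mono {m m' : ℕ} {f : (ℕ → Bool) → ℝ} (hf : DependsOnFirst m f)
    (h : m ≤ m') : DependsOnFirst m' f :=
  fun c c' hc => hf c c' fun t ht => hc t (ht.trans_le h)

theorem DependsOnFirst.mul {m : ℕ} {f g : (ℕ → Bool) → ℝ} (hf : DependsOnFirst m f)
    (hg : DependsOnFirst m g) : DependsOnFirst m (fun c => f c * g c) :=
  fun c c' hc => by simp only [hf c c' hc, hg c c' hc]

section Independence

variable (p : ℝ)

/-- Independence of disjoint blocks of coins. -/
theorem expVal_mul_shift (m k : ℕ) {f : (ℕ → Bool) → ℝ} (hf : DependsOnFirst m f)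
    (g : (ℕ → Bool) → ℝ) :
    expVal p (m + k) (fun c => f c * g (fun t => c (m + t))) = expVal p m f * expVal p k g := by
  simp only [expVal, sum_mul_sum]
  rw [← (Fin.appendEquiv m k).sum_comp, Fintype.sum_prod_type]
  refine sum_congr rfl fun a _ => sum_congr rfl fun b _ => ?_
  have hfa : f (ext (m + k) (Fin.append a b)) = f (ext m a) :=
    hf _ _ fun t ht => ext_append_of_lt a b ht
  simp only [Fin.appendEquiv, Equiv.coe_fn_mk, hfa, ext_append_add, wt_append]
  ring

theorem expVal_of_dependsOnFirst {m n : ℕ} (h : m ≤ n) {f : (ℕ → Bool) → ℝ}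
    (hf : DependsOnFirst m f) : expVal p n f = expVal p m f := by
  obtain ⟨k, rfl⟩ := Nat.exists_eq_add_of_le h
  simpa [expVal_const] using expVal_mul_shift p m k hf (fun _ => 1)

end Independence

/-- Indicator of `F_{k+1} ∈ A(p)`. -/
def inclIndicator (k : ℕ) (c : ℕ → Bool) : ℝ := if included c k then 1 else 0

theorem inclIndicator_nonneg (k : ℕ) (c : ℕ → Bool) : 0 ≤ inclIndicator k c := by
  unfold inclIndicator; split <;> norm_num

theorem inclIndicator_le_one (k : ℕ) (c : ℕ → Bool) : inclIndicator k c ≤ 1 := by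
  unfold inclIndicator; split <;> norm_num

theorem inclIndicator_mul_self (k : ℕ) (c : ℕ → Bool) :
    inclIndicator k c * inclIndicator k c = inclIndicator k c := by
  unfold inclIndicator; split <;> norm_num

theorem inclIndicator_mul_succ (k : ℕ) (c : ℕ → Bool) :
    inclIndicator k c * inclIndicator (k + 1) c = 0 := by
  unfold inclIndicator; cases h : included c k <;> simp [included, h]

theorem inclIndicator_succ (k : ℕ) (c : ℕ → Bool) :
    inclIndicator (k + 1) c
      = (1 - inclIndicator k c) * inclIndicator 0 (fun t => c (k + 1 + t)) := by
  unfold inclIndicator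
  cases h : included c k <;> cases h' : c (k + 1) <;> simp [included, h, h']

theorem included_congr {c c' : ℕ → Bool} {k : ℕ} (h : ∀ t ≤ k, c t = c' t) :
    included c k = included c' k := by
  induction k with
  | zero => simp [included, h 0 le_rfl]
  | succ k ih => simp [included, ih fun t ht => h t (by omega), h (k + 1) le_rfl]

theorem dependsOnFirst_inclIndicator (k : ℕ) : DependsOnFirst (k + 1) (inclIndicator k) :=
  fun c c' h => by rw [inclIndicator, included_congr fun t ht => h t (by omega), inclIndicator]

/-- After an included index `i`, the index `i + 1` is excluded, so the process restarts afresh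
at `i + 2`. -/
theorem included_add_two {c : ℕ → Bool} {i : ℕ} (h : included c i = true) (m : ℕ) :
    included c (i + 2 + m) = included (fun t => c (i + 2 + t)) m := by
  induction m with
  | zero => simp [included, h]
  | succ m ih => simp only [included, ← ih]; rfl

theorem inclIndicator_mul_add_two (i m : ℕ) (c : ℕ → Bool) :
    inclIndicator i c * inclIndicator (i + 2 + m) c
      = inclIndicator i c * inclIndicator m (fun t => c (i + 2 + t)) := by
  by_cases h : included c i
  · simp only [inclIndicator, included_add_two h]
  · simp [inclIndicator, h]

section InclusionProbability

variable (p : ℝ)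

theorem expVal_inclIndicator_self (k : ℕ) :
    expVal p (k + 1) (inclIndicator k) = probIncl p (k + 1) := by
  rw [probIncl, finProb_eq_expVal, Nat.add_sub_cancel]
  congr 1 with c
  unfold inclIndicator
  congr

theorem expVal_inclIndicator {k n : ℕ} (h : k < n) :
    expVal p n (inclIndicator k) = probIncl p (k + 1) := by
  rw [expVal_of_dependsOnFirst p h (dependsOnFirst_inclIndicator k), expVal_inclIndicator_self]

theorem probIncl_zero : probIncl p 0 = 0 := by
  simp [probIncl, finProb, included, _root_.ext]

theorem probIncl_one : probIncl p 1 = p := by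
  simp [probIncl, finProb, included, _root_.ext, wt,
    ← (Equiv.funUnique (Fin 1) Bool).symm.sum_comp]

theorem probIncl_succ (k : ℕ) : probIncl p (k + 1) = p * (1 - probIncl p k) := by
  rcases k with _ | k
  · rw [probIncl_one, probIncl_zero]; ring
  have hdep : DependsOnFirst (k + 1) (fun c => 1 - inclIndicator k c) :=
    fun c c' h => by simp only [dependsOnFirst_inclIndicator k c c' h]
  rw [← expVal_inclIndicator_self, funext (inclIndicator_succ k),
    expVal_mul_shift p (k + 1) 1 hdep, expVal_sub, expVal_const, expVal_inclIndicator_self,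
    expVal_inclIndicator_self p 0, probIncl_one]
  ring

theorem probIncl_eq (hp : p ≠ -1) (k : ℕ) : probIncl p k = p / (1 + p) * (1 - (-p) ^ k) := by
  have hp' : 1 + p ≠ 0 := fun h => hp (by linarith)
  induction k with
  | zero => simp [probIncl_zero]
  | succ k ih =>
    rw [probIncl_succ, ih]
    field_simp
    ring

variable {p}

theorem probIncl_nonneg (h0 : 0 ≤ p) (h1 : p ≤ 1) (k : ℕ) : 0 ≤ probIncl p k := by
  rcases k with _ | k
  · rw [probIncl_zero]
  rw [← expVal_inclIndicator_self, ← expVal_const p (k + 1) 0]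
  exact expVal_mono (k + 1) h0 h1 (inclIndicator_nonneg k)

theorem probIncl_le_one (h0 : 0 ≤ p) (h1 : p ≤ 1) (k : ℕ) : probIncl p k ≤ 1 := by
  rcases k with _ | k
  · rw [probIncl_zero]; exact zero_le_one
  rw [← expVal_inclIndicator_self, ← expVal_const p (k + 1) 1]
  exact expVal_mono (k + 1) h0 h1 (inclIndicator_le_one k)

theorem abs_probIncl_sub_le (h0 : 0 ≤ p) (h1 : p ≤ 1) {k l : ℕ} (hkl : k ≤ l) :
    |probIncl p k - probIncl p l| ≤ 2 * p ^ (k + 1) := by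
  have hdiff : probIncl p k - probIncl p l = p / (1 + p) * ((-p) ^ l - (-p) ^ k) := by
    rw [probIncl_eq p (by linarith), probIncl_eq p (by linarith)]
    ring
  have hpow : |(-p) ^ l - (-p) ^ k| ≤ 2 * p ^ k := by
    have hlk : p ^ l ≤ p ^ k := pow_le_pow_of_le_one h0 h1 hkl
    calc |(-p) ^ l - (-p) ^ k| ≤ |(-p) ^ l| + |(-p) ^ k| := abs_sub _ _
      _ = p ^ l + p ^ k := by simp [abs_pow, abs_of_nonneg h0]
      _ ≤ 2 * p ^ k := by linarith
  rw [hdiff, abs_mul, abs_of_nonneg (by positivity)]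
  calc p / (1 + p) * |(-p) ^ l - (-p) ^ k| ≤ p * (2 * p ^ k) :=
        mul_le_mul (div_le_self h0 (by linarith)) hpow (abs_nonneg _) h0
    _ = 2 * p ^ (k + 1) := by ring

end InclusionProbability

section Covariance

variable {p : ℝ}

theorem cov_self_le_of_mul_self (n : ℕ) {f : (ℕ → Bool) → ℝ} (hf : ∀ c, f c * f c = f c) :
    cov p n f f ≤ 1 / 4 := by
  rw [cov, funext hf]
  nlinarith [sq_nonneg (expVal p n f - 1 / 2)]

theorem cov_inclIndicator_succ_nonpos (h0 : 0 ≤ p) (h1 : p ≤ 1) {i n : ℕ} (h : i + 1 < n) :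
    cov p n (inclIndicator i) (inclIndicator (i + 1)) ≤ 0 := by
  rw [cov, funext (inclIndicator_mul_succ i), expVal_const, expVal_inclIndicator p (by omega),
    expVal_inclIndicator p h]
  nlinarith [probIncl_nonneg h0 h1 (i + 1), probIncl_nonneg h0 h1 (i + 1 + 1)]

theorem cov_inclIndicator_add_two_le (h0 : 0 ≤ p) (h1 : p ≤ 1) {i m n : ℕ} (h : i + 2 + m < n) :
    cov p n (inclIndicator i) (inclIndicator (i + 2 + m)) ≤ 2 * p ^ (m + 2) := by
  have hdep : DependsOnFirst (i + 2 + (m + 1))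
      (fun c => inclIndicator i c * inclIndicator (i + 2 + m) c) :=
    ((dependsOnFirst_inclIndicator i).mono (by omega)).mul (dependsOnFirst_inclIndicator _)
  have hprod : expVal p n (fun c => inclIndicator i c * inclIndicator (i + 2 + m) c)
      = probIncl p (i + 1) * probIncl p (m + 1) := by
    rw [expVal_of_dependsOnFirst p (show i + 2 + (m + 1) ≤ n by omega) hdep,
      funext (inclIndicator_mul_add_two i m),
      expVal_mul_shift p (i + 2) (m + 1) ((dependsOnFirst_inclIndicator i).mono (by omega)),
      expVal_inclIndicator p (by omega : i < i + 2), expVal_inclIndicator_self]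
  have hdiff := abs_probIncl_sub_le h0 h1 (show m + 1 ≤ i + 2 + m + 1 by omega)
  have ha0 := probIncl_nonneg h0 h1 (i + 1)
  have ha1 := probIncl_le_one h0 h1 (i + 1)
  rw [cov, hprod, expVal_inclIndicator p (by omega), expVal_inclIndicator p h]
  set a := probIncl p (i + 1)
  calc a * probIncl p (m + 1) - a * probIncl p (i + 2 + m + 1)
      = a * (probIncl p (m + 1) - probIncl p (i + 2 + m + 1)) := by ring
    _ ≤ a * |probIncl p (m + 1) - probIncl p (i + 2 + m + 1)| :=
        mul_le_mul_of_nonneg_left (le_abs_self _) ha0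
    _ ≤ 1 * (2 * p ^ (m + 1 + 1)) := mul_le_mul ha1 hdiff (abs_nonneg _) zero_le_one
    _ = 2 * p ^ (m + 2) := by ring

theorem cov_inclIndicator_le_of_le (h0 : 0 ≤ p) (h1 : p ≤ 1) {i j n : ℕ} (hij : i ≤ j)
    (hj : j < n) : cov p n (inclIndicator i) (inclIndicator j) ≤ 2 * p ^ (j - i) := by
  obtain ⟨d, rfl⟩ := Nat.exists_eq_add_of_le hij
  match d with
  | 0 => simpa using (cov_self_le_of_mul_self n (inclIndicator_mul_self i)).trans (by norm_num)
  | 1 => simpa using (cov_inclIndicator_succ_nonpos h0 h1 hj).trans (by positivity)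
  | m + 2 =>
    rw [show i + (m + 2) = i + 2 + m by omega, show i + 2 + m - i = m + 2 by omega]
    exact cov_inclIndicator_add_two_le h0 h1 (by omega)

theorem cov_inclIndicator_le (h0 : 0 ≤ p) (h1 : p ≤ 1) {i j n : ℕ} (hi : i < n) (hj : j < n) :
    cov p n (inclIndicator i) (inclIndicator j) ≤ 2 * p ^ Nat.dist i j := by
  rcases le_total i j with h | h
  · rw [Nat.dist_eq_sub_of_le h]
    exact cov_inclIndicator_le_of_le h0 h1 h hj
  · rw [Nat.dist_eq_sub_of_le_right h, cov_comm]
    exact cov_inclIndicator_le_of_le h0 h1 h hi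

end Covariance

theorem sum_range_pow_dist_le {p : ℝ} (h0 : 0 ≤ p) (h1 : p < 1) (i n : ℕ) :
    ∑ j ∈ range n, p ^ Nat.dist i j ≤ 2 / (1 - p) := by
  have geom (N : ℕ) : ∑ k ∈ range N, p ^ k ≤ 1 / (1 - p) := by
    simpa using geom_sum_Ico_le_of_lt_one (x := p) (m := 0) (n := N) h0 h1
  have below : ∑ j ∈ range i, p ^ Nat.dist i j = ∑ j ∈ range i, p ^ (j + 1) := by
    rw [← sum_range_reflect]
    refine sum_congr rfl fun j hj => ?_
    rw [Finset.mem_range] at hj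
    congr 1
    unfold Nat.dist
    omega
  have above : ∑ k ∈ range n, p ^ Nat.dist i (i + k) = ∑ k ∈ range n, p ^ k := by
    simp [Nat.dist_eq_sub_of_le]
  calc ∑ j ∈ range n, p ^ Nat.dist i j
      ≤ ∑ j ∈ range (i + n), p ^ Nat.dist i j :=
        sum_le_sum_of_subset_of_nonneg (range_mono (by omega)) fun _ _ _ => by positivity
    _ = ∑ j ∈ range i, p ^ (j + 1) + ∑ k ∈ range n, p ^ k := by
        rw [sum_range_add, below, above]
    _ ≤ ∑ j ∈ range i, p ^ j + ∑ k ∈ range n, p ^ k := by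
        grw [sum_le_sum fun j _ => pow_le_pow_of_le_one h0 h1.le j.le_succ]
    _ ≤ 1 / (1 - p) + 1 / (1 - p) := add_le_add (geom i) (geom n)
    _ = 2 / (1 - p) := by ring

theorem countIn_eq_sum (n : ℕ) (c : ℕ → Bool) :
    (countIn n c : ℝ) = ∑ k ∈ range n, inclIndicator k c := by
  rw [countIn, card_filter, Nat.cast_sum, ← Ico_add_one_right_eq_Icc, sum_Ico_eq_sum_range]
  simp [inclIndicator, add_comm]

/-- `Var(W_n) = O(n)`: there is a constant `C` (depending on `p`) with
`Var(W_n) ≤ C·n` for all `n`, where `W_n = #A_n(p)`. -/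
theorem variance_count_big_O (p : ℝ) (hp0 : 0 < p) (hp1 : p < 1) :
    ∃ C : ℝ, ∀ n : ℕ,
      expVal p n (fun c =>
          ((countIn n c : ℝ) - expVal p n (fun c' => (countIn n c' : ℝ))) ^ 2)
        ≤ C * n := by
  refine ⟨4 / (1 - p), fun n => ?_⟩
  simp only [countIn_eq_sum]
  rw [expVal_sum_sub_sq]
  calc ∑ i ∈ range n, ∑ j ∈ range n, cov p n (inclIndicator i) (inclIndicator j)
      ≤ ∑ i ∈ range n, ∑ j ∈ range n, 2 * p ^ Nat.dist i j :=
        sum_le_sum fun i hi => sum_le_sum fun j hj =>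
          cov_inclIndicator_le hp0.le hp1.le (mem_range.1 hi) (mem_range.1 hj)
    _ ≤ ∑ _i ∈ range n, 4 / (1 - p) := sum_le_sum fun i _ => by
        rw [← mul_sum, show 4 / (1 - p) = 2 * (2 / (1 - p)) by ring]
        gcongr
        exact sum_range_pow_dist_le hp0.le hp1 i n
    _ = 4 / (1 - p) * n := by simp [mul_comm]

end
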